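/- Let F be a pricing function with marginal-rate function G and let f>0 be the unit trading fee. Suppose (α₁,β₁) and (α₂,β₂) satisfy G(β_i)/α_i > 1+f for i=1,2, with α₁ ≤ α₂ and β₁ ≤ β₂ and (α₁,β₁) ≠ (α₂,β₂). Then φ^A(α₁,β₁) < φ^A(α₂,β₂) and φ^B(α₁,β₁) > φ^B(α₂,β₂); that is, on the region {(α,β) : G(β)/α > 1+f}, φ^A is strictly increasing and φ^B is strictly decreasing in each of α and β. -/

import Mathlib

open Set Filter Topology

/-- A pricing function `F` with partial derivatives `Fx`, `Fy` and marginal-rate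
function `G` (with derivative `G'`), as in Assumption 1 (Pricing Formula):
(i) `F` is continuously differentiable with positive partial derivatives;
(ii) `Fx/Fy = G(x/y)` where `G` is continuously differentiable, strictly
decreasing (negative derivative), with `G → ∞` at `0⁺` and `G → 0` at `∞`;
(iii) homogeneity of level sets. -/
structure PricingFunction (F Fx Fy : ℝ → ℝ → ℝ) (G G' : ℝ → ℝ) : Prop where
  partialX : ∀ x y : ℝ, 0 < x → 0 < y → HasDerivAt (fun t => F t y) (Fx x y) x
  partialY : ∀ x y : ℝ, 0 < x → 0 < y → HasDerivAt (fun t => F x t) (Fy x y) y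
  contX : ContinuousOn (fun p : ℝ × ℝ => Fx p.1 p.2) (Ioi 0 ×ˢ Ioi 0)
  contY : ContinuousOn (fun p : ℝ × ℝ => Fy p.1 p.2) (Ioi 0 ×ˢ Ioi 0)
  posX : ∀ x y : ℝ, 0 < x → 0 < y → 0 < Fx x y
  posY : ∀ x y : ℝ, 0 < x → 0 < y → 0 < Fy x y
  ratio : ∀ x y : ℝ, 0 < x → 0 < y → Fx x y / Fy x y = G (x / y)
  derivG : ∀ z : ℝ, 0 < z → HasDerivAt G (G' z) z
  contG' : ContinuousOn G' (Ioi 0)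
  negG' : ∀ z : ℝ, 0 < z → G' z < 0
  tendstoG0 : Tendsto G (𝓝[>] (0:ℝ)) atTop
  tendstoGtop : Tendsto G atTop (𝓝 0)
  homog : ∀ x y x' y' c : ℝ, 0 < x → 0 < y → 0 < x' → 0 < y' → 0 < c →
    F x y = F x' y' → F (c * x) (c * y) = F (c * x') (c * y')

/-!
Write `u = 1 - φᴬ`, `v = 1 - φᴮ` and `r = G⁻¹(α(1+f))`. The post-trade point `(βu, v)` lies on the
ray `{a = r b}` and on the level curve of `F` through `(β, 1)`. Raising `α` lowers `r` (as `G`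
decreases) and raising `β` raises the level, so the point moves to a steeper ray or a higher level
curve, and since `F` increases in both arguments its height `v` grows. For `u`, rescale the first
point by `c = β₂/β₁`: by homogeneity of level sets it lands on the level curve through `(β₂, c)`,
above the one through `(β₂, 1)`, and on a ray no steeper than the second point's, so its abscissa
`β₂u₁` exceeds `β₂u₂`.
-/

section PositiveQuadrant

variable {Φ : ℝ × ℝ → ℝ}

-- `hslope`: the ray through `q` is at least as steep as the one through `p`.
theorem snd_lt_of_le_of_slope_le (hΦ : StrictMonoOn Φ (Ioi 0 ×ˢ Ioi 0)) {p q : ℝ × ℝ}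
    (hp : p ∈ Ioi 0 ×ˢ Ioi 0) (hq : q ∈ Ioi 0 ×ˢ Ioi 0) (hlevel : Φ p ≤ Φ q)
    (hslope : q.1 * p.2 ≤ p.1 * q.2) (hstrict : Φ p < Φ q ∨ q.1 * p.2 < p.1 * q.2) :
    p.2 < q.2 := by
  have hp₁ : 0 < p.1 := hp.1
  have hp₂ : 0 < p.2 := hp.2
  by_contra! hqp₂
  have hqp₁ : q.1 ≤ p.1 := le_of_mul_le_mul_right (by nlinarith) hp₂
  rcases hstrict with hlt | hlt
  · exact (hΦ.monotoneOn hq hp ⟨hqp₁, hqp₂⟩).not_gt hlt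
  · have : q < p := Prod.lt_iff.2 (Or.inl ⟨by nlinarith, hqp₂⟩)
    exact (hΦ hq hp this).not_ge hlevel

-- `hslope`: the ray through `q` is at most as steep as the one through `p`.
theorem fst_lt_of_le_of_slope_le (hΦ : StrictMonoOn Φ (Ioi 0 ×ˢ Ioi 0)) {p q : ℝ × ℝ}
    (hp : p ∈ Ioi 0 ×ˢ Ioi 0) (hq : q ∈ Ioi 0 ×ˢ Ioi 0) (hlevel : Φ p ≤ Φ q)
    (hslope : q.2 * p.1 ≤ p.2 * q.1) (hstrict : Φ p < Φ q ∨ q.2 * p.1 < p.2 * q.1) :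
    p.1 < q.1 :=
  snd_lt_of_le_of_slope_le (Φ := Φ ∘ Prod.swap) (p := p.swap) (q := q.swap)
    (hΦ.comp (fun _ _ _ _ h => Prod.swap_lt_swap.2 h) fun _ h => ⟨h.2, h.1⟩)
    ⟨hp.2, hp.1⟩ ⟨hq.2, hq.1⟩ hlevel hslope hstrict

end PositiveQuadrant

namespace PricingFunction

variable {F Fx Fy : ℝ → ℝ → ℝ} {G G' : ℝ → ℝ}

theorem strictAntiOn_marginalRate (hF : PricingFunction F Fx Fy G G') : StrictAntiOn G (Ioi 0) :=
  strictAntiOn_of_deriv_neg (convex_Ioi 0)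
    (fun z hz => (hF.derivG z hz).continuousAt.continuousWithinAt)
    fun z hz => by
      rw [interior_Ioi] at hz
      exact (hF.derivG z hz).deriv ▸ hF.negG' z hz

theorem strictMonoOn_left (hF : PricingFunction F Fx Fy G G') {y : ℝ} (hy : 0 < y) :
    StrictMonoOn (fun x => F x y) (Ioi 0) :=
  strictMonoOn_of_deriv_pos (convex_Ioi 0)
    (fun x hx => (hF.partialX x y hx hy).continuousAt.continuousWithinAt)
    fun x hx => by
      rw [interior_Ioi] at hx
      exact (hF.partialX x y hx hy).deriv ▸ hF.posX x y hx hy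

theorem strictMonoOn_right (hF : PricingFunction F Fx Fy G G') {x : ℝ} (hx : 0 < x) :
    StrictMonoOn (fun y => F x y) (Ioi 0) :=
  strictMonoOn_of_deriv_pos (convex_Ioi 0)
    (fun y hy => (hF.partialY x y hx hy).continuousAt.continuousWithinAt)
    fun y hy => by
      rw [interior_Ioi] at hy
      exact (hF.partialY x y hx hy).deriv ▸ hF.posY x y hx hy

theorem strictMonoOn_uncurry (hF : PricingFunction F Fx Fy G G') :
    StrictMonoOn (fun p : ℝ × ℝ => F p.1 p.2) (Ioi 0 ×ˢ Ioi 0) := by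
  rintro ⟨x, y⟩ ⟨hx, hy⟩ ⟨x', y'⟩ ⟨hx', hy'⟩ hlt
  simp only [mem_Ioi] at hx hy hx' hy'
  rcases Prod.lt_iff.1 hlt with ⟨hxx, hyy⟩ | ⟨hxx, hyy⟩
  · calc F x y < F x' y := hF.strictMonoOn_left hy hx hx' hxx
      _ ≤ F x' y' := (hF.strictMonoOn_right hx').monotoneOn hy hy' hyy
  · calc F x y ≤ F x' y := (hF.strictMonoOn_left hy).monotoneOn hx hx' hxx
      _ < F x' y' := hF.strictMonoOn_right hx' hy hy' hyy

theorem lt_of_level_le_of_ray_le (hF : PricingFunction F Fx Fy G G') {β₁ β₂ r₁ r₂ u₁ u₂ v₁ v₂ : ℝ}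
    (hβ₁ : 0 < β₁) (hr₂ : 0 < r₂) (hv₁ : 0 < v₁) (hv₂ : 0 < v₂)
    (hray₁ : β₁ * u₁ = r₁ * v₁) (hray₂ : β₂ * u₂ = r₂ * v₂)
    (hlevel₁ : F (β₁ * u₁) v₁ = F β₁ 1) (hlevel₂ : F (β₂ * u₂) v₂ = F β₂ 1)
    (hβ : β₁ ≤ β₂) (hr : r₂ ≤ r₁) (hstrict : β₁ < β₂ ∨ r₂ < r₁) :
    v₁ < v₂ ∧ u₂ < u₁ := by
  have hβ₂ : 0 < β₂ := hβ₁.trans_le hβ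
  have hr₁ : 0 < r₁ := hr₂.trans_le hr
  have hmem₁ : (β₁ * u₁, v₁) ∈ Ioi (0 : ℝ) ×ˢ Ioi 0 := ⟨hray₁ ▸ mul_pos hr₁ hv₁, hv₁⟩
  have hmem₂ : (β₂ * u₂, v₂) ∈ Ioi (0 : ℝ) ×ˢ Ioi 0 := ⟨hray₂ ▸ mul_pos hr₂ hv₂, hv₂⟩
  have hlevel : F (β₁ * u₁) v₁ ≤ F (β₂ * u₂) v₂ := by
    rw [hlevel₁, hlevel₂]; exact (hF.strictMonoOn_left one_pos).monotoneOn hβ₁ hβ₂ hβ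
  have hlevel_lt : β₁ < β₂ → F (β₁ * u₁) v₁ < F (β₂ * u₂) v₂ := fun h => by
    rw [hlevel₁, hlevel₂]; exact hF.strictMonoOn_left one_pos hβ₁ hβ₂ h
  have hslope : β₂ * u₂ * v₁ ≤ β₁ * u₁ * v₂ := by
    rw [hray₁, hray₂]; nlinarith [mul_pos hv₁ hv₂]
  have hslope_lt : r₂ < r₁ → β₂ * u₂ * v₁ < β₁ * u₁ * v₂ := fun h => by
    rw [hray₁, hray₂]; nlinarith [mul_pos hv₁ hv₂]
  refine ⟨snd_lt_of_le_of_slope_le hF.strictMonoOn_uncurry hmem₁ hmem₂ hlevel hslope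
    (hstrict.imp hlevel_lt hslope_lt), ?_⟩
  set c := β₂ / β₁
  have hc₀ : 0 < c := div_pos hβ₂ hβ₁
  have hcβ₁ : c * β₁ = β₂ := div_mul_cancel₀ β₂ hβ₁.ne'
  have hscaled : F (c * (β₁ * u₁)) (c * v₁) = F β₂ c := by
    simpa only [hcβ₁, mul_one] using hF.homog _ _ _ _ c hmem₁.1 hv₁ hβ₁ one_pos hc₀ hlevel₁
  have hmem : (c * (β₁ * u₁), c * v₁) ∈ Ioi (0 : ℝ) ×ˢ Ioi 0 :=
    ⟨mul_pos hc₀ hmem₁.1, mul_pos hc₀ hv₁⟩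
  have hlevel' : F (β₂ * u₂) v₂ ≤ F (c * (β₁ * u₁)) (c * v₁) := by
    rw [hlevel₂, hscaled]
    exact (hF.strictMonoOn_right hβ₂).monotoneOn (mem_Ioi.2 one_pos) hc₀ ((one_le_div hβ₁).2 hβ)
  have hlevel_lt' : β₁ < β₂ → F (β₂ * u₂) v₂ < F (c * (β₁ * u₁)) (c * v₁) := fun h => by
    rw [hlevel₂, hscaled]
    exact hF.strictMonoOn_right hβ₂ (mem_Ioi.2 one_pos) hc₀ ((one_lt_div hβ₁).2 h)
  have hfst : β₂ * u₂ < c * (β₁ * u₁) :=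
    fst_lt_of_le_of_slope_le hF.strictMonoOn_uncurry hmem₂ hmem hlevel'
      (by nlinarith [mul_le_mul_of_nonneg_left hslope hc₀.le])
      (hstrict.imp hlevel_lt' fun h => by nlinarith [mul_lt_mul_of_pos_left (hslope_lt h) hc₀])
  rw [← mul_assoc, hcβ₁] at hfst
  exact lt_of_mul_lt_mul_left hfst hβ₂.le

end PricingFunction

theorem stmt3_general (F Fx Fy : ℝ → ℝ → ℝ) (G G' Ginv : ℝ → ℝ)
    (hF : PricingFunction F Fx Fy G G')
    (hGinv : ∀ u : ℝ, 0 < u → 0 < Ginv u ∧ G (Ginv u) = u)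
    (f : ℝ) (hf : 0 < f)
    (φA φB : ℝ → ℝ → ℝ)
    (hφ : ∀ α β : ℝ, 0 < α → 0 < β → 1 + f < G β / α →
      φA α β < 0 ∧ φB α β ∈ Ioo (0:ℝ) 1 ∧
      (1 - φA α β) / (1 - φB α β) = (1 / β) * Ginv (α * (1 + f)) ∧
      F (β * (1 - φA α β)) (1 - φB α β) = F β 1)
    (α₁ β₁ α₂ β₂ : ℝ) (hα₁ : 0 < α₁) (hβ₁ : 0 < β₁)
    (h₁ : 1 + f < G β₁ / α₁) (h₂ : 1 + f < G β₂ / α₂)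
    (hαle : α₁ ≤ α₂) (hβle : β₁ ≤ β₂) (hne : (α₁, β₁) ≠ (α₂, β₂)) :
    φA α₁ β₁ < φA α₂ β₂ ∧ φB α₂ β₂ < φB α₁ β₁ := by
  have hα₂ := hα₁.trans_le hαle
  have hβ₂ := hβ₁.trans_le hβle
  have hray : ∀ α β, 0 < α → 0 < β → 1 + f < G β / α →
      0 < 1 - φB α β ∧ β * (1 - φA α β) = Ginv (α * (1 + f)) * (1 - φB α β) := by
    intro α β hα hβ hreg
    obtain ⟨-, hB, hratio, -⟩ := hφ α β hα hβ hreg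
    have hv : 0 < 1 - φB α β := by linarith [hB.2]
    refine ⟨hv, ?_⟩
    field_simp at hratio
    linarith
  obtain ⟨hr₁, hGr₁⟩ := hGinv (α₁ * (1 + f)) (by positivity)
  obtain ⟨hr₂, hGr₂⟩ := hGinv (α₂ * (1 + f)) (by positivity)
  have hαf : α₁ * (1 + f) < α₂ * (1 + f) ↔ α₁ < α₂ := mul_lt_mul_iff_left₀ (by positivity)
  have hr : Ginv (α₂ * (1 + f)) ≤ Ginv (α₁ * (1 + f)) := by
    rw [← hF.strictAntiOn_marginalRate.le_iff_ge hr₁ hr₂, hGr₁, hGr₂]; gcongr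
  have hstrict : β₁ < β₂ ∨ Ginv (α₂ * (1 + f)) < Ginv (α₁ * (1 + f)) := by
    rw [← hF.strictAntiOn_marginalRate.lt_iff_gt hr₁ hr₂, hGr₁, hGr₂, hαf]
    by_contra! h
    exact hne (by rw [hαle.antisymm h.2, hβle.antisymm h.1])
  obtain ⟨hv₁, hray₁⟩ := hray α₁ β₁ hα₁ hβ₁ h₁
  obtain ⟨hv₂, hray₂⟩ := hray α₂ β₂ hα₂ hβ₂ h₂
  obtain ⟨hv, hu⟩ := hF.lt_of_level_le_of_ray_le hβ₁ hr₂ hv₁ hv₂ hray₁ hray₂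
    (hφ α₁ β₁ hα₁ hβ₁ h₁).2.2.2 (hφ α₂ β₂ hα₂ hβ₂ h₂).2.2.2 hβle hr hstrict
  constructor <;> linarith

/-- Proposition 1(i), monotonicity on the region `G(β)/α > 1+f`: `φᴬ` is
strictly increasing and `φᴮ` is strictly decreasing in each of `α` and `β`. -/
theorem stmt3 (F Fx Fy : ℝ → ℝ → ℝ) (G G' Ginv : ℝ → ℝ)
    (hF : PricingFunction F Fx Fy G G')
    (hGinv : ∀ u : ℝ, 0 < u → 0 < Ginv u ∧ G (Ginv u) = u)
    (f : ℝ) (hf : 0 < f)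
    (φA φB : ℝ → ℝ → ℝ)
    (hφ : ∀ α β : ℝ, 0 < α → 0 < β → 1 + f < G β / α →
      φA α β < 0 ∧ φB α β ∈ Ioo (0:ℝ) 1 ∧
      (1 - φA α β) / (1 - φB α β) = (1 / β) * Ginv (α * (1 + f)) ∧
      F (β * (1 - φA α β)) (1 - φB α β) = F β 1)
    (α₁ β₁ α₂ β₂ : ℝ) (hα₁ : 0 < α₁) (hβ₁ : 0 < β₁) (hα₂ : 0 < α₂) (hβ₂ : 0 < β₂)
    (h₁ : 1 + f < G β₁ / α₁) (h₂ : 1 + f < G β₂ / α₂)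
    (hαle : α₁ ≤ α₂) (hβle : β₁ ≤ β₂) (hne : (α₁, β₁) ≠ (α₂, β₂)) :
    φA α₁ β₁ < φA α₂ β₂ ∧ φB α₂ β₂ < φB α₁ β₁ :=
  stmt3_general F Fx Fy G G' Ginv hF hGinv f hf φA φB hφ α₁ β₁ α₂ β₂ hα₁ hβ₁ h₁ h₂ hαle hβle hne
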